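/- arXiv:1609.09770 — 5 statements merged into one kernel-verified Lean document; each statement's English description precedes it below -/
import Mathlib

section
/- (Siegel's linear independence criterion.) Let θ₁,…,θ_p be real numbers, not all zero. Let τ > 0, and (Q_n) a sequence of real numbers with limit +∞. Let 𝒩 be an infinite subset of ℕ, and for each n ∈ 𝒩 let L^{(n)} = [ℓ^{(n)}_{i,j}]_{1≤i,j≤p} be a p×p matrix with integer entries and non-zero determinant such that, as n → ∞ in 𝒩: max_{1≤i,j≤p} |ℓ^{(n)}_{i,j}| ≤ Q_n^{1+o(1)} and max_{1≤j≤p} |ℓ^{(n)}_{1,j} θ₁ + … + ℓ^{(n)}_{p,j} θ_p| ≤ Q_n^{−τ+o(1)} (i.e. for every ε > 0, for all sufficiently large n ∈ 𝒩, the first maximum is ≤ Q_n^{1+ε} and the second is ≤ Q_n^{−τ+ε}). Then dim_ℚ Span_ℚ(θ₁,…,θ_p) ≥ τ + 1. -/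
open Filter Matrix Module Submodule Set Equiv Finset Real Topology
open scoped Nat

/-!
Let `r = dim_ℚ Span_ℚ(θ)`. Clearing denominators in a ℚ-basis of the span writes `θ = a ψ`
with `a` an integer `p × r` matrix of rank `r` and `ψ₁, …, ψ_r` non-zero reals. For each `n`, the
matrix `L⁽ⁿ⁾ᵀ a` still has rank `r`, so `r` of its rows form an integer matrix `M` with
`|det M| ≥ 1`, entries `≤ Q_n^{1+o(1)}`, and `M ψ` made of the small linear forms, of size
`≤ Q_n^{-τ+o(1)}`. By Cramer's rule `ψ₁ det M` is a determinant with one small column, whence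
`0 < |ψ₁| ≤ Q_n^{r-1-τ+o(1)}`; letting `n → ∞` in `𝒩` forces `r ≥ τ + 1`.
-/

theorem Matrix.exists_submatrix_det_ne_zero_of_rank_eq {K m : Type*} [Field K] [Fintype m]
    {r : ℕ} (A : Matrix m (Fin r) K) (hA : A.rank = r) :
    ∃ g : Fin r → m, (A.submatrix g id).det ≠ 0 := by
  obtain ⟨κ, s, -, hspan, hli⟩ := exists_linearIndependent' K A.row
  have : Fintype κ := @Fintype.ofFinite κ hli.finite
  have hcard : Fintype.card κ = r := by
    rw [← finrank_span_eq_card hli, hspan, ← rank_eq_finrank_span_row, hA]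
  let e : Fin r ≃ κ := (Fintype.equivFinOfCardEq hcard).symm
  have hrows : LinearIndependent K (A.submatrix (s ∘ e) id).row := hli.comp e e.injective
  exact ⟨s ∘ e,
    ((isUnit_iff_isUnit_det _).mp (linearIndependent_rows_iff_isUnit.mp hrows)).ne_zero⟩

theorem exists_int_coeffs_rank_eq_finrank_span {ι E : Type*} [Fintype ι] [AddCommGroup E]
    [Module ℚ E] (θ : ι → E) {r : ℕ} (hr : finrank ℚ (span ℚ (range θ)) = r) :
    ∃ (a : Matrix ι (Fin r) ℤ) (ψ : Fin r → E),
      (a.map (Int.cast : ℤ → ℚ)).rank = r ∧ (∀ k, ψ k ≠ 0) ∧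
        ∀ i, θ i = ∑ k, a i k • ψ k := by
  subst hr
  set V := span ℚ (range θ)
  have : FiniteDimensional ℚ V := .span_of_finite ℚ (finite_range θ)
  let b := finBasis ℚ V
  let θ' : ι → V := fun i => ⟨θ i, subset_span (mem_range_self i)⟩
  have hθ' : span ℚ (range θ') = ⊤ := by
    convert span_span_coe_preimage (R := ℚ) (s := range θ)
    ext ⟨x, hx⟩
    simp [θ']
  let C : Matrix ι (Fin (finrank ℚ V)) ℚ := fun i k => b.repr (θ' i) k
  obtain ⟨⟨d, hd⟩, hC⟩ := IsLocalization.exist_integer_multiples_of_finite (nonZeroDivisors ℤ)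
    fun ik : ι × Fin _ => C ik.1 ik.2
  choose a ha using hC
  have hd0 : (d : ℚ) ≠ 0 := Int.cast_ne_zero.mpr (nonZeroDivisors.ne_zero hd)
  have haC : ∀ i k, (a (i, k) : ℚ) = d * C i k := fun i k => by simpa using ha (i, k)
  refine ⟨Matrix.of fun i k => a (i, k), fun k => (d : ℚ)⁻¹ • (b k : E), ?_, fun k => ?_,
    fun i => ?_⟩
  · have hmap : (Matrix.of fun i k => a (i, k)).map (Int.cast : ℤ → ℚ) = (d : ℚ) • C := by
      ext i k; simp [haC]
    have hrows : range C = b.equivFun '' range θ' := by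
      rw [← range_comp]; rfl
    rw [hmap, rank_smul_of_mem_nonZeroDivisors _ (mem_nonZeroDivisors_of_ne_zero hd0),
      rank_eq_finrank_span_row, row_def, hrows, span_image_linearEquiv, hθ', Submodule.map_top,
      LinearEquiv.range, finrank_top, finrank_fin_fun]
  · exact smul_ne_zero (inv_ne_zero hd0) (by simpa using b.ne_zero k)
  · have hrepr := congrArg Subtype.val (b.sum_repr (θ' i))
    simp only [Submodule.coe_sum, Submodule.coe_smul] at hrepr
    refine hrepr.symm.trans (Finset.sum_congr rfl fun k _ => ?_)
    rw [of_apply, ← Int.cast_smul_eq_zsmul ℚ, smul_smul, haC, mul_comm (d : ℚ),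
      mul_inv_cancel_right₀ hd0]

theorem Matrix.abs_det_le_of_abs_col_le {n : Type*} [Fintype n] [DecidableEq n]
    (A : Matrix n n ℝ) (k : n) {S T : ℝ} (hcol : ∀ i, |A i k| ≤ S)
    (hA : ∀ i j, j ≠ k → |A i j| ≤ T) :
    |A.det| ≤ (Fintype.card n)! * (S * T ^ (Fintype.card n - 1)) := by
  have hσ : ∀ σ : Perm n, ∏ i, |A (σ i) i| ≤ S * T ^ (Fintype.card n - 1) := by
    intro σ
    have hrest : ∏ i ∈ univ.erase k, |A (σ i) i| ≤ T ^ (Fintype.card n - 1) := by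
      calc ∏ i ∈ univ.erase k, |A (σ i) i| ≤ ∏ _i ∈ univ.erase k, T :=
            prod_le_prod (fun _ _ => abs_nonneg _) fun i hi => hA _ _ (ne_of_mem_erase hi)
        _ = T ^ (Fintype.card n - 1) := by
          rw [prod_const, card_erase_of_mem (mem_univ k), Finset.card_univ]
    rw [← mul_prod_erase _ _ (mem_univ k)]
    exact mul_le_mul (hcol _) hrest (prod_nonneg fun _ _ => abs_nonneg _)
      ((abs_nonneg _).trans (hcol k))
  calc |A.det| = |∑ σ : Perm n, Perm.sign σ • ∏ i, A (σ i) i| := by rw [det_apply]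
    _ ≤ ∑ σ : Perm n, |Perm.sign σ • ∏ i, A (σ i) i| := abs_sum_le_sum_abs _ _
    _ = ∑ σ : Perm n, ∏ i, |A (σ i) i| := by
      simp_rw [← AbsoluteValue.abs_apply, AbsoluteValue.map_units_int_smul,
        AbsoluteValue.map_prod]
    _ ≤ ∑ _σ : Perm n, S * T ^ (Fintype.card n - 1) := sum_le_sum fun σ _ => hσ σ
    _ = _ := by simp [Fintype.card_perm]

theorem Matrix.det_updateCol_mulVec {R n : Type*} [CommRing R] [Fintype n] [DecidableEq n]
    (A : Matrix n n R) (v : n → R) (k : n) : (A.updateCol k (A *ᵥ v)).det = A.det * v k := by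
  simp [← cramer_apply, cramer_eq_adjugate_mulVec, mulVec_mulVec, adjugate_mul, smul_mulVec]

theorem abs_le_of_intMatrix_mulVec {n : Type*} [Fintype n] [DecidableEq n] (M : Matrix n n ℤ)
    (hM : M.det ≠ 0) (ψ : n → ℝ) {S T : ℝ} (hMT : ∀ i j, |(M i j : ℝ)| ≤ T)
    (hMψ : ∀ i, |(M.map (Int.cast : ℤ → ℝ) *ᵥ ψ) i| ≤ S) (k : n) :
    |ψ k| ≤ (Fintype.card n)! * (S * T ^ (Fintype.card n - 1)) := by
  set M' := M.map (Int.cast : ℤ → ℝ)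
  have hdet : 1 ≤ |M'.det| := by
    rw [show M'.det = M.det from ((Int.castRingHom ℝ).map_det M).symm]
    exact_mod_cast Int.one_le_abs hM
  calc |ψ k| ≤ |M'.det| * |ψ k| := le_mul_of_one_le_left (abs_nonneg _) hdet
    _ = |(M'.updateCol k (M' *ᵥ ψ)).det| := by rw [det_updateCol_mulVec, abs_mul]
    _ ≤ _ := by
      refine abs_det_le_of_abs_col_le _ k (by simpa using hMψ) fun i j hj => ?_
      simpa [updateCol_ne hj, M'] using hMT i j

theorem abs_le_of_linear_forms_le {ι : Type*} [Fintype ι] [DecidableEq ι] {r : ℕ}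
    (L : Matrix ι ι ℤ) (hL : L.det ≠ 0) (a : Matrix ι (Fin r) ℤ)
    (ha : (a.map (Int.cast : ℤ → ℚ)).rank = r) (θ : ι → ℝ) (ψ : Fin r → ℝ)
    (hθ : ∀ i, θ i = ∑ k, a i k • ψ k) {A S T : ℝ} (haA : ∀ i k, |(a i k : ℝ)| ≤ A)
    (hLT : ∀ i j, |(L i j : ℝ)| ≤ T) (hLθ : ∀ j, |∑ i, (L i j : ℝ) * θ i| ≤ S)
    (k : Fin r) :
    |ψ k| ≤ r ! * (S * (Fintype.card ι * T * A) ^ (r - 1)) := by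
  set B := Lᵀ * a
  have hB : (B.map (Int.cast : ℤ → ℚ)).rank = r := by
    have hLdet : (Lᵀ.map (Int.cast : ℤ → ℚ)).det ≠ 0 := by
      rwa [transpose_map, det_transpose, ← Int.cast_det, Int.cast_ne_zero]
    have hmul : B.map (Int.cast : ℤ → ℚ) =
        Lᵀ.map (Int.cast : ℤ → ℚ) * a.map (Int.cast : ℤ → ℚ) :=
      Matrix.map_mul (f := Int.castRingHom ℚ)
    rwa [hmul, rank_mul_eq_right_of_det_ne_zero _ _ hLdet]
  obtain ⟨g, hg⟩ := exists_submatrix_det_ne_zero_of_rank_eq _ hB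
  have hM : (B.submatrix g id).det ≠ 0 := by
    rw [submatrix_map, ← Int.cast_det] at hg
    exact Int.cast_ne_zero.mp hg
  have hentries : ∀ m l, |(B.submatrix g id m l : ℝ)| ≤ Fintype.card ι * T * A := fun m l =>
    calc |(B (g m) l : ℝ)| = |∑ i, (L i (g m) : ℝ) * a i l| := by simp [B, mul_apply]
      _ ≤ ∑ i, |(L i (g m) : ℝ) * a i l| := abs_sum_le_sum_abs _ _
      _ ≤ ∑ _i : ι, T * A := sum_le_sum fun i _ => by
          rw [abs_mul]
          exact mul_le_mul (hLT _ _) (haA _ _) (abs_nonneg _) ((abs_nonneg _).trans (hLT i (g m)))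
      _ = Fintype.card ι * T * A := by simp [mul_assoc]
  have hforms : ∀ m, |((B.submatrix g id).map (Int.cast : ℤ → ℝ) *ᵥ ψ) m| ≤ S := fun m => by
    convert hLθ (g m) using 2
    simp only [hθ, mulVec, dotProduct, map_apply, submatrix_apply, B, mul_apply, transpose_apply,
      Int.cast_sum, Int.cast_mul, zsmul_eq_mul, Finset.sum_mul, Finset.mul_sum, mul_assoc, id]
    exact Finset.sum_comm
  simpa using abs_le_of_intMatrix_mulVec _ hM ψ hentries hforms k

theorem nonneg_of_eventually_le_mul_rpow {α : Type*} {l : Filter α} [l.NeBot] {Q : α → ℝ}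
    (hQ : Tendsto Q l atTop) {c C σ : ℝ} (hc : 0 < c) (h : ∀ᶠ x in l, c ≤ C * Q x ^ σ) :
    0 ≤ σ := by
  by_contra! hσ
  have hlim : Tendsto (fun x => C * Q x ^ σ) l (𝓝 0) := by
    simpa using ((tendsto_rpow_neg_atTop (neg_pos.mpr hσ)).comp hQ).const_mul C
  exact hc.not_ge (ge_of_tendsto hlim h)

theorem siegel_linear_independence_criterion_general
    (p : ℕ) (θ : Fin p → ℝ) (hθ : θ ≠ 0)
    (τ : ℝ)
    (Q : ℕ → ℝ) (hQ : Tendsto Q atTop atTop)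
    (𝒩 : Set ℕ) (h𝒩 : 𝒩.Infinite)
    (L : ℕ → Matrix (Fin p) (Fin p) ℤ)
    (hdet : ∀ n ∈ 𝒩, (L n).det ≠ 0)
    (hsize : ∀ ε : ℝ, 0 < ε → ∀ᶠ n in atTop ⊓ Filter.principal 𝒩,
      ∀ i j : Fin p, (|L n i j| : ℝ) ≤ (Q n) ^ ((1 : ℝ) + ε))
    (hlin : ∀ ε : ℝ, 0 < ε → ∀ᶠ n in atTop ⊓ Filter.principal 𝒩,
      ∀ j : Fin p, |∑ i : Fin p, (L n i j : ℝ) * θ i| ≤ (Q n) ^ (-τ + ε)) :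
    τ + 1 ≤ (Module.finrank ℚ (Submodule.span ℚ (Set.range θ)) : ℝ) := by
  have : FiniteDimensional ℚ (span ℚ (range θ)) := .span_of_finite ℚ (finite_range θ)
  have hr : 0 < finrank ℚ (span ℚ (range θ)) := Nat.pos_of_ne_zero fun h =>
    hθ <| funext fun i => span_eq_bot.mp (finrank_eq_zero.mp h) _ ⟨i, rfl⟩
  generalize hr_def : finrank ℚ (span ℚ (range θ)) = r at hr ⊢
  obtain ⟨a, ψ, ha, hψ, hθa⟩ := exists_int_coeffs_rank_eq_finrank_span θ hr_def
  obtain ⟨A, hA⟩ := Finite.exists_le fun ik : Fin p × Fin r => |(a ik.1 ik.2 : ℝ)|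
  have : (atTop ⊓ 𝓟 𝒩).NeBot :=
    frequently_iff_neBot.mp (Nat.frequently_atTop_iff_infinite.mpr h𝒩)
  refine le_of_forall_pos_le_add fun δ hδ => ?_
  set ε := δ / r
  have hε : 0 < ε := by positivity
  have hbound : ∀ᶠ n in atTop ⊓ 𝓟 𝒩, |ψ ⟨0, hr⟩| ≤
      r ! * (p * A) ^ (r - 1) * Q n ^ (-τ + ε + (1 + ε) * ((r : ℝ) - 1)) := by
    filter_upwards [hsize ε hε, hlin ε hε, (hQ.mono_left inf_le_left).eventually_gt_atTop 0,
      inf_le_right (a := atTop) (mem_principal_self 𝒩)] with n hs hl hQn hn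
    have hpow : (Q n ^ (1 + ε)) ^ (r - 1) = Q n ^ ((1 + ε) * ((r : ℝ) - 1)) := by
      rw [← rpow_natCast, ← rpow_mul hQn.le, Nat.cast_pred hr]
    calc |ψ ⟨0, hr⟩|
        ≤ r ! * (Q n ^ (-τ + ε) * (Fintype.card (Fin p) * Q n ^ (1 + ε) * A) ^ (r - 1)) :=
          abs_le_of_linear_forms_le (L n) (hdet n hn) a ha θ ψ hθa (fun i k => hA (i, k)) hs hl _
      _ = _ := by rw [rpow_add hQn (-τ + ε), ← hpow, Fintype.card_fin]; ring
  have hexp_nonneg := nonneg_of_eventually_le_mul_rpow (hQ.mono_left inf_le_left) (abs_pos.mpr (hψ _))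
    hbound
  have hεr : ε * r = δ := div_mul_cancel₀ δ (by positivity)
  linarith [show -τ + ε + (1 + ε) * ((r : ℝ) - 1) = r - 1 - τ + ε * r by ring]

/-- **Siegel's linear independence criterion.**
Let `θ₁, …, θ_p` be real numbers, not all zero, `τ > 0`, and `(Q_n)` a sequence of reals
tending to `+∞`. Suppose that for every `n` in an infinite set `𝒩 ⊆ ℕ` we are given a
`p × p` integer matrix `L n` with non-zero determinant such that, as `n → ∞` in `𝒩`,
`max_{i,j} |(L n)_{i,j}| ≤ Q_n^{1+o(1)}` and
`max_j |∑_i (L n)_{i,j} θ_i| ≤ Q_n^{-τ+o(1)}`.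
Then `dim_ℚ Span_ℚ(θ₁,…,θ_p) ≥ τ + 1`. -/
theorem siegel_linear_independence_criterion
    (p : ℕ) (hp : 0 < p) (θ : Fin p → ℝ) (hθ : θ ≠ 0)
    (τ : ℝ) (hτ : 0 < τ)
    (Q : ℕ → ℝ) (hQ : Tendsto Q atTop atTop)
    (𝒩 : Set ℕ) (h𝒩 : 𝒩.Infinite)
    (L : ℕ → Matrix (Fin p) (Fin p) ℤ)
    (hdet : ∀ n ∈ 𝒩, (L n).det ≠ 0)
    (hsize : ∀ ε : ℝ, 0 < ε → ∀ᶠ n in atTop ⊓ Filter.principal 𝒩,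
      ∀ i j : Fin p, (|L n i j| : ℝ) ≤ (Q n) ^ ((1 : ℝ) + ε))
    (hlin : ∀ ε : ℝ, 0 < ε → ∀ᶠ n in atTop ⊓ Filter.principal 𝒩,
      ∀ j : Fin p, |∑ i : Fin p, (L n i j : ℝ) * θ i| ≤ (Q n) ^ (-τ + ε)) :
    τ + 1 ≤ (Module.finrank ℚ (Submodule.span ℚ (Set.range θ)) : ℝ) :=
  siegel_linear_independence_criterion_general p θ hθ τ Q hQ 𝒩 h𝒩 L hdet hsize hlin
end

section
/- Let N ≥ 1 and ω = e^{2iπ/N}. The functions 1 and Li_j(ω^ℓ z), for integers j ≥ 1 and 1 ≤ ℓ ≤ N, are linearly independent over ℂ(z): if a ≥ 1 and Q(z) + ∑_{j=1}^a ∑_{ℓ=1}^N Q_{j,ℓ}(z) · Li_j(ω^ℓ z) = 0 for all z in some nonempty open subset of the punctured open unit disk, where Q and the Q_{j,ℓ} are rational functions in ℂ(z), then Q = 0 and Q_{j,ℓ} = 0 for all j, ℓ. -/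
/-!
Clearing denominators turns the relation into `P(z) + ∑ P_{j,ℓ}(z) Li_j(ξ_ℓ z) = 0` with
polynomials, on an open subset of the unit disk. The left side is a power series there, so by
the identity theorem all its coefficients vanish. For `n` large the `n`-th coefficient is
`∑_{j,ℓ,k} c_{j,ℓ,k} ξ_ℓ^{n-k} / (n-k)^j`, where `c_{j,ℓ,k}` is the `k`-th coefficient of
`P_{j,ℓ}`. Along a residue class `n ≡ s (mod N)` the powers
`ξ_ℓ^{n-k}` are constant, so uniqueness of partial fractions kills the combined coefficients
`∑_ℓ c_{j,ℓ,k} ξ_ℓ^{s-k}`, and a Vandermonde argument over `s` kills each `c_{j,ℓ,k}`.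
-/

/-- The polylogarithm `Li_j(z) = ∑_{m ≥ 1} z^m / m^j` (the `m = 0` term vanishes
by the convention `1/0 = 0`). -/
noncomputable def polyLi (j : ℕ) (z : ℂ) : ℂ := ∑' m : ℕ, z ^ m / (m : ℂ) ^ j

open Filter Finset Polynomial FormalMultilinearSeries

section PowerSeries

variable {R : Type*} [CommRing R] [TopologicalSpace R] [IsTopologicalRing R]
  {c : ℕ → R} {z L : R}

-- `c 0 = 0` makes the terms with `n < k`, where `n - k` truncates to `0`, vanish.
theorem HasSum.pow_mul_of_apply_zero (hc : c 0 = 0) (h : HasSum (fun m => c m * z ^ m) L)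
    (k : ℕ) : HasSum (fun n => c (n - k) * z ^ n) (z ^ k * L) := by
  rw [← hasSum_nat_add_iff' k]
  have hlow : ∑ i ∈ range k, c (i - k) * z ^ i = 0 :=
    sum_eq_zero fun i hi => by rw [Nat.sub_eq_zero_of_le (mem_range.1 hi).le, hc, zero_mul]
  simpa only [Nat.add_sub_cancel, pow_add, hlow, sub_zero, mul_left_comm,
    mul_comm (z ^ _) (z ^ k)] using h.mul_left (z ^ k)

theorem HasSum.polynomial_eval_mul (hc : c 0 = 0) (h : HasSum (fun m => c m * z ^ m) L)
    (P : R[X]) {d : ℕ} (hd : P.natDegree ≤ d) :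
    HasSum (fun n => (∑ k ∈ range (d + 1), P.coeff k * c (n - k)) * z ^ n) (P.eval z * L) := by
  rw [eval_eq_sum_range' (Nat.lt_succ_of_le hd), sum_mul]
  simp only [sum_mul, mul_assoc]
  exact hasSum_sum fun k _ => (h.pow_mul_of_apply_zero hc k).mul_left _

end PowerSeries

theorem Polynomial.hasSum_coeff_mul_pow {R : Type*} [Semiring R] [TopologicalSpace R]
    (P : R[X]) (z : R) : HasSum (fun n => P.coeff n * z ^ n) (P.eval z) := by
  rw [eval_eq_sum_range]
  exact hasSum_sum_of_ne_finset_zero fun n hn => by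
    rw [coeff_eq_zero_of_natDegree_lt (by simpa using hn), zero_mul]

theorem eq_zero_of_hasSum_mul_pow_of_eqOn_zero {A : ℕ → ℂ} {G : ℂ → ℂ} {r : ℝ}
    (hG : ∀ z ∈ Metric.ball (0 : ℂ) r, HasSum (fun n => A n * z ^ n) (G z))
    {V : Set ℂ} (hVo : IsOpen V) (hVne : V.Nonempty) (hVr : V ⊆ Metric.ball 0 r)
    (hGV : ∀ z ∈ V, G z = 0) : A = 0 := by
  obtain ⟨z₀, hz₀⟩ := hVne
  have hr : 0 < r := Metric.pos_of_mem_ball (hVr hz₀)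
  have hradius : ENNReal.ofReal r ≤ (ofScalars ℂ A).radius := by
    refine ENNReal.le_of_forall_nnreal_lt fun ρ hρ =>
      (ofScalars ℂ A).le_radius_of_tendsto (l := 0) ?_
    have hρ' : (ρ : ℂ) ∈ Metric.ball 0 r := by
      simpa [ENNReal.coe_lt_ofReal] using hρ
    simpa only [ofScalars_norm, norm_mul, norm_pow, Complex.norm_real, NNReal.norm_eq, norm_zero]
      using (hG _ hρ').summable.tendsto_atTop_zero.norm
  have hF : HasFPowerSeriesOnBall G (ofScalars ℂ A) 0 (ENNReal.ofReal r) := by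
    refine ⟨hradius, ENNReal.ofReal_pos.2 hr, fun {y} hy => ?_⟩
    rw [Metric.eball_ofReal] at hy
    simpa only [ofScalars_apply_eq, smul_eq_mul, zero_add] using hG y hy
  have hball : Set.EqOn G 0 (Metric.ball 0 r) := by
    rw [← Metric.eball_ofReal]
    exact hF.analyticOnNhd.eqOn_zero_of_preconnected_of_eventuallyEq_zero
      Metric.isPreconnected_eball (by rw [Metric.eball_ofReal]; exact hVr hz₀)
      (eventually_of_mem (hVo.mem_nhds hz₀) hGV)
  exact (ofScalars_series_eq_zero ℂ).1 <| hF.hasFPowerSeriesAt.eq_zero_of_eventually <|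
    eventually_of_mem (Metric.ball_mem_nhds 0 hr) hball

theorem hasSum_polyLi {j : ℕ} (hj : j ≠ 0) {w : ℂ} (hw : ‖w‖ < 1) :
    HasSum (fun m : ℕ => w ^ m / (m : ℂ) ^ j) (polyLi j w) := by
  refine (Summable.of_norm_bounded (summable_geometric_of_lt_one (norm_nonneg w) hw)
    fun m => ?_).hasSum
  rw [norm_div, norm_pow, norm_pow]
  rcases m.eq_zero_or_pos with rfl | hm
  · simp [hj]
  · exact div_le_self (by positivity) <| one_le_pow₀ <| by
      simpa using Nat.one_le_iff_ne_zero.2 hm.ne'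

theorem hasSum_polyLi_mul {j : ℕ} (hj : j ≠ 0) {ξ z : ℂ} (hξ : ‖ξ‖ = 1)
    (hz : ‖z‖ < 1) : HasSum (fun m : ℕ => ξ ^ m / (m : ℂ) ^ j * z ^ m) (polyLi j (ξ * z)) :=
  (hasSum_polyLi hj (by rwa [norm_mul, hξ, one_mul])).congr_fun fun m => by ring

namespace Polynomial
variable {F ι : Type*} [Field F] [DecidableEq ι] {s : Finset ι} {c : ι → F} {a : ℕ}

theorem coeff_sum_C_mul_X_pow_rev (b : Fin a → F) (j : Fin a) :
    (∑ i : Fin a, C (b i) * X ^ (i.rev : ℕ)).coeff j.rev = b j := by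
  simp only [finsetSum_coeff, coeff_C_mul_X_pow, Fin.val_inj, Fin.rev_inj, sum_ite_eq, mem_univ,
    if_true]

theorem natDegree_sum_C_mul_X_pow_rev_lt (b : Fin a → F) (ha : 0 < a) :
    (∑ i : Fin a, C (b i) * X ^ (i.rev : ℕ)).natDegree < a := by
  refine (natDegree_sum_le_of_forall_le _ _ fun i _ => ?_).trans_lt (Nat.sub_lt ha one_pos)
  exact (natDegree_C_mul_X_pow_le _ _).trans (by rw [Fin.val_rev]; omega)

theorem eq_zero_of_sum_mul_prod_erase_X_sub_C_pow_eq_zero (hc : Set.InjOn c s)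
    {p : ι → F[X]} (hp : ∀ i ∈ s, (p i).natDegree < a)
    (h : ∑ i ∈ s, p i * ∏ i' ∈ s.erase i, (X - C (c i')) ^ a = 0) : ∀ i ∈ s, p i = 0 := by
  intro i hi
  have hrest : (X - C (c i)) ^ a ∣
      ∑ i' ∈ s.erase i, p i' * ∏ i'' ∈ s.erase i', (X - C (c i'')) ^ a :=
    dvd_sum fun i' hi' => dvd_mul_of_dvd_right (dvd_prod_of_mem _ <|
      mem_erase.2 ⟨(ne_of_mem_erase hi').symm, hi⟩) _
  have hterm : (X - C (c i)) ^ a ∣ p i * ∏ i' ∈ s.erase i, (X - C (c i')) ^ a := by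
    rw [← dvd_add_left hrest,
      add_sum_erase s (fun i => p i * ∏ i' ∈ s.erase i, (X - C (c i')) ^ a) hi, h]
    exact dvd_zero _
  have hcop : IsCoprime ((X - C (c i)) ^ a) (∏ i' ∈ s.erase i, (X - C (c i')) ^ a) :=
    IsCoprime.prod_right fun i' hi' => IsCoprime.pow <| isCoprime_X_sub_C_of_isUnit_sub <|
      (sub_ne_zero.2 fun he => ne_of_mem_erase hi' (hc (mem_of_mem_erase hi') hi he.symm)).isUnit
  refine eq_zero_of_dvd_of_natDegree_lt (hcop.dvd_of_dvd_mul_right hterm) ?_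
  rw [natDegree_pow, natDegree_X_sub_C, mul_one]
  exact hp i hi

theorem eval_sum_comp_mul_prod_erase {x : F} (hx : ∀ i ∈ s, x ≠ c i) (b : ι → Fin a → F) :
    (∑ i ∈ s, (∑ j : Fin a, C (b i j) * X ^ (j.rev : ℕ)).comp (X - C (c i)) *
      ∏ i' ∈ s.erase i, (X - C (c i')) ^ a).eval x =
    (∑ i ∈ s, ∑ j : Fin a, b i j / (x - c i) ^ ((j : ℕ) + 1)) * ∏ i ∈ s, (x - c i) ^ a := by
  simp only [eval_finsetSum, eval_mul, eval_comp, eval_prod, eval_pow, eval_sub, eval_X, eval_C,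
    sum_mul]
  refine sum_congr rfl fun i hi => ?_
  rw [← mul_prod_erase s _ hi]
  refine sum_congr rfl fun j _ => ?_
  have hne : x - c i ≠ 0 := sub_ne_zero.2 (hx i hi)
  have hpow : (x - c i) ^ a = (x - c i) ^ (j.rev : ℕ) * (x - c i) ^ ((j : ℕ) + 1) := by
    rw [← pow_add, Fin.val_rev]; congr 1; omega
  rw [hpow]
  field_simp

theorem eq_zero_of_sum_div_sub_pow_eq_zero (hc : Set.InjOn c s) {b : ι → Fin a → F}
    {S : Set F} (hS : S.Infinite) (hSc : ∀ x ∈ S, ∀ i ∈ s, x ≠ c i)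
    (h : ∀ x ∈ S, ∑ i ∈ s, ∑ j : Fin a, b i j / (x - c i) ^ ((j : ℕ) + 1) = 0) :
    ∀ i ∈ s, ∀ j, b i j = 0 := by
  intro i₀ hi₀ j₀
  have hroots : S ⊆ {x | IsRoot (∑ i ∈ s, (∑ j : Fin a, C (b i j) * X ^ (j.rev : ℕ)).comp
      (X - C (c i)) * ∏ i' ∈ s.erase i, (X - C (c i')) ^ a) x} := fun x hx => by
    rw [Set.mem_ofPred_eq, IsRoot, eval_sum_comp_mul_prod_erase (hSc x hx), h x hx, zero_mul]
  have hcomp := eq_zero_of_sum_mul_prod_erase_X_sub_C_pow_eq_zero hc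
    (fun i _ => by
      rw [natDegree_comp, natDegree_X_sub_C, mul_one]
      exact natDegree_sum_C_mul_X_pow_rev_lt _ (Fin.pos j₀))
    (eq_zero_of_infinite_isRoot _ (hS.mono hroots)) i₀ hi₀
  rw [sub_eq_add_neg, ← C_neg, comp_X_add_C_eq_zero_iff] at hcomp
  rw [← coeff_sum_C_mul_X_pow_rev (b i₀) j₀, hcomp, coeff_zero]

end Polynomial

section RootsOfUnity

variable {F : Type*} [Field F] [CharZero F] {M N a d n₀ : ℕ} {ξ : Fin M → F}
  {c : Fin a → Fin M → ℕ → F}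

theorem sum_mul_pow_eq_zero_of_sum_pow_sub_div_pow_eq_zero (hN : N ≠ 0) (hξN : ∀ ℓ, ξ ℓ ^ N = 1)
    (h : ∀ n ≥ n₀, ∑ j, ∑ ℓ, ∑ k ∈ range (d + 1),
      c j ℓ k * (ξ ℓ ^ (n - k) / ((n - k : ℕ) : F) ^ ((j : ℕ) + 1)) = 0)
    {s : ℕ} (hs : n₀ + d < s) (j : Fin a) {k : ℕ} (hk : k ≤ d) :
    ∑ ℓ, c j ℓ k * ξ ℓ ^ (s - k) = 0 := by
  have hprog : Function.Injective fun m : ℕ => ((s + N * m : ℕ) : F) :=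
    Nat.cast_injective.comp fun m m' hm => by simpa [hN] using hm
  refine eq_zero_of_sum_div_sub_pow_eq_zero (Nat.cast_injective.injOn (s := ↑(range (d + 1))))
    (b := fun k j => ∑ ℓ, c j ℓ k * ξ ℓ ^ (s - k)) (Set.infinite_range_of_injective hprog)
    ?_ ?_ k (mem_range.2 (Nat.lt_succ_of_le hk)) j
  · rintro _ ⟨m, rfl⟩ k' hk'
    have hk'd := mem_range.1 hk'
    exact Nat.cast_injective.ne (by omega : s + N * m ≠ k')
  · rintro _ ⟨m, rfl⟩
    refine Eq.trans ?_ (h (s + N * m) (by omega))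
    simp only [sum_div]
    rw [sum_comm]
    refine sum_congr rfl fun j' _ => ?_
    rw [sum_comm]
    refine sum_congr rfl fun ℓ _ => sum_congr rfl fun k' hk' => ?_
    have hk'd := mem_range.1 hk'
    rw [Nat.cast_sub (by omega : k' ≤ s + N * m),
      show s + N * m - k' = (s - k') + N * m by omega, pow_add (ξ ℓ), pow_mul (ξ ℓ), hξN,
      one_pow, mul_one, mul_div_assoc]

theorem eq_zero_of_sum_pow_sub_div_pow_eq_zero (hN : N ≠ 0) (hξ : Function.Injective ξ)
    (hξN : ∀ ℓ, ξ ℓ ^ N = 1)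
    (h : ∀ n ≥ n₀, ∑ j, ∑ ℓ, ∑ k ∈ range (d + 1),
      c j ℓ k * (ξ ℓ ^ (n - k) / ((n - k : ℕ) : F) ^ ((j : ℕ) + 1)) = 0)
    (j : Fin a) (ℓ : Fin M) {k : ℕ} (hk : k ≤ d) : c j ℓ k = 0 := by
  have hξ0 : ξ ℓ ≠ 0 := fun h0 => by simpa [h0, zero_pow hN] using hξN ℓ
  have hv := Matrix.eq_zero_of_forall_pow_sum_mul_pow_eq_zero hξ
    (v := fun ℓ => c j ℓ k * ξ ℓ ^ (n₀ + d + 1 - k)) fun i => by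
      have hs := sum_mul_pow_eq_zero_of_sum_pow_sub_div_pow_eq_zero hN hξN h
        (s := n₀ + d + 1 + i) (by omega) j hk
      simpa only [mul_assoc, ← pow_add, show n₀ + d + 1 + i - k = n₀ + d + 1 - k + i by omega]
        using hs
  exact (mul_eq_zero.1 (congrFun hv ℓ)).resolve_right (pow_ne_zero _ hξ0)

end RootsOfUnity

theorem eq_zero_of_eval_add_sum_eval_mul_polyLi_eq_zero {M N a : ℕ} (hN : N ≠ 0)
    {ξ : Fin M → ℂ} (hξ : Function.Injective ξ) (hξN : ∀ ℓ, ξ ℓ ^ N = 1)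
    {P : ℂ[X]} {Pc : Fin a → Fin M → ℂ[X]} {V : Set ℂ} (hVo : IsOpen V) (hVne : V.Nonempty)
    (hV : V ⊆ Metric.ball 0 1)
    (h : ∀ z ∈ V, P.eval z + ∑ j, ∑ ℓ, (Pc j ℓ).eval z * polyLi (j + 1) (ξ ℓ * z) = 0) :
    P = 0 ∧ ∀ j ℓ, Pc j ℓ = 0 := by
  obtain ⟨d, hd⟩ : ∃ d, ∀ j ℓ, (Pc j ℓ).natDegree ≤ d :=
    ⟨univ.sup fun p : Fin a × Fin M => (Pc p.1 p.2).natDegree, fun j ℓ =>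
      le_sup (f := fun p : Fin a × Fin M => (Pc p.1 p.2).natDegree) (mem_univ (j, ℓ))⟩
  set A : ℕ → ℂ := fun n => P.coeff n + ∑ j, ∑ ℓ, ∑ k ∈ range (d + 1),
    (Pc j ℓ).coeff k * (ξ ℓ ^ (n - k) / ((n - k : ℕ) : ℂ) ^ ((j : ℕ) + 1))
  have hA : A = 0 := by
    refine eq_zero_of_hasSum_mul_pow_of_eqOn_zero (fun z hz => ?_) hVo hVne hV h
    have hz : ‖z‖ < 1 := by simpa using hz
    have hLi : ∀ j ℓ, HasSum (fun n => (∑ k ∈ range (d + 1), (Pc j ℓ).coeff k *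
        (ξ ℓ ^ (n - k) / ((n - k : ℕ) : ℂ) ^ ((j : ℕ) + 1))) * z ^ n)
        ((Pc j ℓ).eval z * polyLi (j + 1) (ξ ℓ * z)) := fun j ℓ =>
      (hasSum_polyLi_mul (by omega) (Complex.norm_eq_one_of_pow_eq_one (hξN ℓ) hN)
        hz).polynomial_eval_mul (by simp) (Pc j ℓ) (hd j ℓ)
    exact ((P.hasSum_coeff_mul_pow z).add (hasSum_sum fun j _ => hasSum_sum fun ℓ _ =>
      hLi j ℓ)).congr_fun fun n => by simp only [A, add_mul, sum_mul]
  have hPc : ∀ j ℓ, Pc j ℓ = 0 := fun j ℓ => by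
    ext k
    rcases le_or_gt k d with hk | hk
    · refine eq_zero_of_sum_pow_sub_div_pow_eq_zero hN hξ hξN (n₀ := P.natDegree + 1)
        (c := fun j ℓ => (Pc j ℓ).coeff) (fun n hn => ?_) j ℓ hk
      simpa [A, coeff_eq_zero_of_natDegree_lt hn] using congrFun hA n
    · exact coeff_eq_zero_of_natDegree_lt ((hd j ℓ).trans_lt hk)
  refine ⟨?_, hPc⟩
  ext n
  simpa [A, hPc] using congrFun hA n

theorem IsPrimitiveRoot.injective_pow_succ {M : Type*} [CommMonoidWithZero M]
    [IsCancelMulZero M] [Nontrivial M] {ζ : M} {N : ℕ} (hζ : IsPrimitiveRoot ζ N) :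
    Function.Injective fun ℓ : Fin N => ζ ^ ((ℓ : ℕ) + 1) := fun ℓ ℓ' h => by
  simp only [pow_succ] at h
  exact Fin.ext <| hζ.pow_inj ℓ.2 ℓ'.2 <| mul_right_cancel₀ (hζ.ne_zero (Fin.pos ℓ).ne') h

theorem RatFunc.exists_common_denom {K ι : Type*} [Field K] [Fintype ι] [DecidableEq ι]
    (f : ι → RatFunc K) :
    ∃ (D : K[X]) (P : ι → K[X]), D ≠ 0 ∧ (∀ i, P i = 0 → f i = 0) ∧
      ∀ z, D.eval z ≠ 0 → ∀ i, D.eval z * (f i).eval (RingHom.id K) z = (P i).eval z := by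
  have hsplit : ∀ i, ∏ i', (f i').denom = (f i).denom * ∏ i' ∈ univ.erase i, (f i').denom :=
    fun i => (mul_prod_erase univ _ (mem_univ i)).symm
  refine ⟨∏ i, (f i).denom, fun i => (f i).num * ∏ i' ∈ univ.erase i, (f i').denom,
    prod_ne_zero_iff.2 fun i _ => denom_ne_zero _, fun i hi => ?_, fun z hz i => ?_⟩
  · exact num_eq_zero_iff.1 <| (mul_eq_zero.1 hi).resolve_right <|
      prod_ne_zero_iff.2 fun i' _ => denom_ne_zero _
  · rw [hsplit i, Polynomial.eval_mul] at hz ⊢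
    have hdenom : (f i).denom.eval z ≠ 0 := left_ne_zero_of_mul hz
    rw [RatFunc.eval, eval₂_id, eval₂_id, Polynomial.eval_mul]
    field_simp

theorem polylog_linear_independence_over_rational_functions_general
    (N : ℕ) (hN : 1 ≤ N) (a : ℕ)
    (Q : RatFunc ℂ) (Qc : Fin a → Fin N → RatFunc ℂ)
    (hvanish : ∃ U : Set ℂ, IsOpen U ∧ U.Nonempty ∧
      U ⊆ {z : ℂ | z ≠ 0 ∧ ‖z‖ < 1} ∧
      ∀ z ∈ U,
        RatFunc.eval (RingHom.id ℂ) z Q +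
          ∑ j : Fin a, ∑ ℓ : Fin N,
            RatFunc.eval (RingHom.id ℂ) z (Qc j ℓ) *
              polyLi (j + 1) (Complex.exp (2 * Real.pi * Complex.I / N) ^ ((ℓ : ℕ) + 1) * z)
          = 0) :
    Q = 0 ∧ ∀ j ℓ, Qc j ℓ = 0 := by
  obtain ⟨U, hUo, ⟨z₀, hz₀⟩, hU, hrel⟩ := hvanish
  have hζ : IsPrimitiveRoot (Complex.exp (2 * Real.pi * Complex.I / N)) N :=
    Complex.isPrimitiveRoot_exp N (by omega)
  obtain ⟨D, P, hD, hP, hDP⟩ := RatFunc.exists_common_denom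
    fun o : Option (Fin a × Fin N) => o.elim Q fun p => Qc p.1 p.2
  have hroots : {z | D.IsRoot z}.Finite := finite_setOfPred_isRoot hD
  have hVne : (U \ {z | D.IsRoot z}).Nonempty :=
    ((infinite_of_mem_nhds z₀ (hUo.mem_nhds hz₀)).sdiff hroots).nonempty
  obtain ⟨hP₀, hPc⟩ := eq_zero_of_eval_add_sum_eval_mul_polyLi_eq_zero (N := N) (by omega)
    hζ.injective_pow_succ (fun ℓ => by rw [pow_right_comm, hζ.pow_eq_one, one_pow])
    (hUo.sdiff hroots.isClosed) hVne (fun z hz => by simpa using (hU hz.1).2)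
    (P := P none) (Pc := fun j ℓ => P (some (j, ℓ))) fun z hz => by
      have hcleared := congrArg (D.eval z * ·) (hrel z hz.1)
      simp only [mul_add, mul_sum, ← mul_assoc, mul_zero] at hcleared
      simpa only [← hDP z hz.2, Option.elim] using hcleared
  exact ⟨hP none hP₀, fun j ℓ => hP (some (j, ℓ)) (hPc j ℓ)⟩

/-- Let `N ≥ 1` and `ω = e^{2iπ/N}`. The functions `1` and `Li_j(ω^ℓ z)`, for `j ≥ 1`
and `1 ≤ ℓ ≤ N`, are linearly independent over `ℂ(z)`: if
`Q(z) + ∑_{j=1}^a ∑_{ℓ=1}^N Q_{j,ℓ}(z) Li_j(ω^ℓ z) = 0` on some nonempty open subset of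
the punctured open unit disk, with `Q, Q_{j,ℓ} ∈ ℂ(z)`, then `Q = 0` and all `Q_{j,ℓ} = 0`. -/
theorem polylog_linear_independence_over_rational_functions
    (N : ℕ) (hN : 1 ≤ N) (a : ℕ) (ha : 1 ≤ a)
    (Q : RatFunc ℂ) (Qc : Fin a → Fin N → RatFunc ℂ)
    (hvanish : ∃ U : Set ℂ, IsOpen U ∧ U.Nonempty ∧
      U ⊆ {z : ℂ | z ≠ 0 ∧ ‖z‖ < 1} ∧
      ∀ z ∈ U,
        RatFunc.eval (RingHom.id ℂ) z Q +
          ∑ j : Fin a, ∑ ℓ : Fin N,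
            RatFunc.eval (RingHom.id ℂ) z (Qc j ℓ) *
              polyLi (j + 1) (Complex.exp (2 * Real.pi * Complex.I / N) ^ ((ℓ : ℕ) + 1) * z)
          = 0) :
    Q = 0 ∧ ∀ j ℓ, Qc j ℓ = 0 :=
  polylog_linear_independence_over_rational_functions_general N hN a Q Qc hvanish
end

section
/- Let a, r, N, n be positive integers with 2rN < a and N | n. Then for all z with |z| > 1, S_∞(z) = V(z) + ∑_{j=1}^a P_j(z) Li_j(1/z), where V(z) = −∑_{t=0}^{n−1} z^t ∑_{j=1}^a ∑_{h=⌈(t+1)/N⌉}^{n/N} p_{j,h}/(Nh−t)^j is a polynomial of degree at most n with rational coefficients. -/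
/-- The rational function
`F(t) = (n/N)!^(a-2rN) (t-rn)_{rn} (t+n+1)_{rn} / ∏_{h=0}^{n/N} (t+Nh)^a`. -/
noncomputable def Frat (a r N n : ℕ) (t : ℚ) : ℚ :=
  ((n / N).factorial : ℚ) ^ (a - 2 * r * N) *
    (ascPochhammer ℚ (r * n)).eval (t - r * n) *
    (ascPochhammer ℚ (r * n)).eval (t + n + 1) /
    ∏ h ∈ Finset.range (n / N + 1), (t + N * h) ^ a

/-- `p` is the family of partial fraction coefficients of `Frat a r N n`. -/
def IsPartialFractionCoeffs (a r N n : ℕ) (p : ℕ → ℕ → ℚ) : Prop :=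
  ∀ t : ℚ, (∀ h ∈ Finset.range (n / N + 1), t + N * h ≠ 0) →
    Frat a r N n t =
      ∑ h ∈ Finset.range (n / N + 1), ∑ j ∈ Finset.Icc 1 a, p j h / (t + N * h) ^ j

/-- `S_∞(z) = ∑_{t=1}^∞ F(t) z^{-t}` (for `|z| > 1`), over `ℂ`. -/
noncomputable def Sinf (a r N n : ℕ) (z : ℂ) : ℂ :=
  ∑' t : ℕ, (Frat a r N n ((t + 1 : ℕ) : ℚ) : ℂ) * z ^ (-((t : ℤ) + 1))

/-- `P_j(z) = ∑_{h=0}^{n/N} p_{j,h} z^{Nh}`. -/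
noncomputable def Ppol (N n : ℕ) (p : ℕ → ℕ → ℚ) (j : ℕ) (z : ℂ) : ℂ :=
  ∑ h ∈ Finset.range (n / N + 1), (p j h : ℂ) * z ^ (N * h)

/-- `V(z) = -∑_{t=0}^{n-1} z^t ∑_{j=1}^a ∑_{h=⌈(t+1)/N⌉}^{n/N} p_{j,h}/(Nh-t)^j`. -/
noncomputable def Vpol (a N n : ℕ) (p : ℕ → ℕ → ℚ) (z : ℂ) : ℂ :=
  -∑ t ∈ Finset.range n, z ^ t *
    ∑ j ∈ Finset.Icc 1 a, ∑ h ∈ Finset.Icc ((t + N) / N) (n / N),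
      (p j h : ℂ) / ((N * h : ℂ) - t) ^ j

/-! Expanding `F` into partial fractions, the term `p_{j,h}/(t + Nh)^j` contributes
`∑_{t ≥ 1} z^{-t}/(t + Nh)^j = z^{Nh} (Li_j(1/z) - ∑_{m=1}^{Nh} z^{-m}/m^j)`, a tail of the
polylogarithm series. Reflecting `m = Nh - t`, the subtracted head becomes
`∑_{t < Nh} z^t/(Nh - t)^j`; regrouping these heads by the power `z^t` gives `-V(z)`, since
`t < Nh` exactly when `h ≥ ⌈(t + 1)/N⌉`. -/

open Finset

lemma summable_pow_div_natCast_pow {w : ℂ} (hw : ‖w‖ < 1) (j : ℕ) :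
    Summable fun m : ℕ => w ^ m / (m : ℂ) ^ j := by
  refine .of_norm_bounded (summable_geometric_of_lt_one (norm_nonneg w) hw) fun m => ?_
  rw [norm_div, norm_pow, norm_pow, Complex.norm_natCast]
  rcases m.eq_zero_or_pos with rfl | hm
  · rcases j.eq_zero_or_pos with rfl | hj
    · simp
    · simp [zero_pow hj.ne']
  · exact div_le_self (by positivity) (one_le_pow₀ (by exact_mod_cast hm))

lemma pow_mul_sum_range_succ_inv_pow_div {z : ℂ} (hz : z ≠ 0) {j : ℕ} (hj : j ≠ 0) (k : ℕ) :
    z ^ k * ∑ m ∈ range (k + 1), z⁻¹ ^ m / (m : ℂ) ^ j =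
      ∑ t ∈ range k, z ^ t / ((k : ℂ) - t) ^ j := by
  rw [sum_range_succ', ← sum_range_reflect]
  simp only [Nat.cast_zero, zero_pow hj, div_zero, add_zero, mul_sum, ← mul_div_assoc]
  refine sum_congr rfl fun t ht => ?_
  have htk : t < k := mem_range.mp ht
  rw [show k - 1 - t + 1 = k - t by omega, Nat.cast_sub htk.le, inv_pow,
    ← pow_sub₀ z hz (Nat.sub_le k t), Nat.sub_sub_self htk.le]

lemma hasSum_zpow_neg_succ_div_add_pow {z : ℂ} (hz : 1 < ‖z‖) {j : ℕ} (hj : j ≠ 0) (k : ℕ) :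
    HasSum (fun t : ℕ => z ^ (-((t : ℤ) + 1)) / (((t + 1 : ℕ) : ℂ) + k) ^ j)
      (z ^ k * polyLi j (1 / z) - ∑ t ∈ range k, z ^ t / ((k : ℂ) - t) ^ j) := by
  have hz0 : z ≠ 0 := norm_pos_iff.mp (one_pos.trans hz)
  have hw : ‖z⁻¹‖ < 1 := by rw [norm_inv]; exact inv_lt_one_of_one_lt₀ hz
  have hLi : HasSum (fun m : ℕ => z⁻¹ ^ m / (m : ℂ) ^ j) (polyLi j (1 / z)) := by
    rw [one_div]; exact (summable_pow_div_natCast_pow hw j).hasSum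
  have htail := ((hasSum_nat_add_iff' (k + 1)).mpr hLi).mul_left (z ^ k)
  rw [mul_sub, pow_mul_sum_range_succ_inv_pow_div hz0 hj] at htail
  refine htail.congr_fun fun t => ?_
  rw [← mul_div_assoc, show t + (k + 1) = k + (t + 1) by ring, pow_add, ← mul_assoc, inv_pow,
    mul_inv_cancel₀ (pow_ne_zero k hz0), one_mul, zpow_neg, ← Nat.cast_succ, zpow_natCast,
    inv_pow, Nat.cast_add k, add_comm (k : ℂ)]

lemma Nat.add_div_le_iff_lt_mul {N : ℕ} (hN : 0 < N) (t h : ℕ) :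
    (t + N) / N ≤ h ↔ t < N * h := by
  rw [Nat.add_div_right t hN, Nat.succ_le_iff, Nat.div_lt_iff_lt_mul hN, mul_comm]

lemma Vpol_eq_neg_sum {a N : ℕ} (hN : 0 < N) (n : ℕ) (p : ℕ → ℕ → ℚ) (z : ℂ) :
    Vpol a N n p z = -∑ h ∈ range (n / N + 1), ∑ j ∈ Icc 1 a,
      (p j h : ℂ) * ∑ t ∈ range (N * h), z ^ t / (((N * h : ℕ) : ℂ) - t) ^ j := by
  have hmem : ∀ h t, h ∈ range (n / N + 1) ∧ t ∈ range (N * h) ↔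
      h ∈ Icc ((t + N) / N) (n / N) ∧ t ∈ range n := by
    intro h t
    simp only [mem_range, mem_Icc, Nat.lt_succ_iff, Nat.add_div_le_iff_lt_mul hN,
      Nat.le_div_iff_mul_le hN, mul_comm h N]
    constructor
    · rintro ⟨hh, ht⟩
      exact ⟨⟨ht, hh⟩, ht.trans_le hh⟩
    · rintro ⟨⟨ht, hh⟩, -⟩
      exact ⟨hh, ht⟩
  rw [Vpol, neg_inj]
  conv_rhs => rw [sum_comm]
  simp_rw [mul_sum]
  rw [sum_congr rfl fun j _ => sum_comm' hmem, sum_comm]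
  refine sum_congr rfl fun t _ => sum_congr rfl fun j _ => sum_congr rfl fun h _ => ?_
  push_cast
  ring

theorem Sinf_Pade_expansion_general
    (a r N n : ℕ) (hN : 0 < N)
    (p : ℕ → ℕ → ℚ) (hp : IsPartialFractionCoeffs a r N n p) :
    ∀ z : ℂ, 1 < ‖z‖ →
      Sinf a r N n z = Vpol a N n p z +
        ∑ j ∈ Finset.Icc 1 a, Ppol N n p j z * polyLi j (1 / z) := by
  intro z hz
  have hS : HasSum (fun t : ℕ => (Frat a r N n ((t + 1 : ℕ) : ℚ) : ℂ) * z ^ (-((t : ℤ) + 1)))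
      (∑ h ∈ range (n / N + 1), ∑ j ∈ Icc 1 a, (p j h : ℂ) *
        (z ^ (N * h) * polyLi j (1 / z) -
          ∑ t ∈ range (N * h), z ^ t / (((N * h : ℕ) : ℂ) - t) ^ j)) := by
    refine (hasSum_sum fun h _ => hasSum_sum fun j hj =>
      (hasSum_zpow_neg_succ_div_add_pow hz (Nat.one_le_iff_ne_zero.mp (mem_Icc.mp hj).1)
        (N * h)).mul_left (p j h : ℂ)).congr_fun fun t => ?_
    rw [hp _ fun h _ => by positivity]
    push_cast
    simp only [sum_mul]
    exact sum_congr rfl fun h _ => sum_congr rfl fun j _ => by ring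
  rw [Sinf, hS.tsum_eq, Vpol_eq_neg_sum hN]
  simp only [Ppol, mul_sub, sum_sub_distrib, sum_mul, mul_assoc]
  rw [sum_comm (s := range (n / N + 1))]
  abel

/-- Let `a, r, N, n` be positive integers with `2rN < a` and `N ∣ n`. Then for `|z| > 1`,
`S_∞(z) = V(z) + ∑_{j=1}^a P_j(z) Li_j(1/z)`, where `V` is the polynomial (of degree at
most `n`, with rational coefficients) defined above. -/
theorem Sinf_Pade_expansion
    (a r N n : ℕ) (ha : 0 < a) (hr : 0 < r) (hN : 0 < N) (hn : 0 < n)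
    (hra : 2 * r * N < a) (hNn : N ∣ n)
    (p : ℕ → ℕ → ℚ) (hp : IsPartialFractionCoeffs a r N n p) :
    ∀ z : ℂ, 1 < ‖z‖ →
      Sinf a r N n z = Vpol a N n p z +
        ∑ j ∈ Finset.Icc 1 a, Ppol N n p j z * polyLi j (1 / z) :=
  Sinf_Pade_expansion_general a r N n hN p hp
end

section
/- Let a, r, N, n be positive integers with 2rN < a and N | n, and set d₀ = a(n/N + 1) − 2rn. Define P_{k,j}, U_k, V_k by the recursions P_{1,j} = P_j, P_{k,j} = P'_{k−1,j} − (1/z)P_{k−1,j+1} (with P_{k−1,a+1} = 0), U₁ = U, U_k = U'_{k−1} − P_{k−1,1}/(1−z), V₁ = V, V_k = V'_{k−1} + P_{k−1,1}/(z(1−z)). Then for every k with 1 ≤ k ≤ d₀ − 1: P_{k,1}(1) = 0, and the rational functions U_k and V_k have no pole at z = 1. -/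
/-- `P_j(z) = ∑_{h=0}^{n/N} p_{j,h} z^{Nh}` for `1 ≤ j ≤ a`, and `0` otherwise. -/
noncomputable def Ppoly (a N n : ℕ) (p : ℕ → ℕ → ℚ) (j : ℕ) : Polynomial ℚ :=
  if 1 ≤ j ∧ j ≤ a then
    ∑ h ∈ Finset.range (n / N + 1), Polynomial.C (p j h) * Polynomial.X ^ (N * h)
  else 0

noncomputable def Upoly (a N n : ℕ) (p : ℕ → ℕ → ℚ) : Polynomial ℚ :=
  -∑ t ∈ Finset.Icc 1 n,
    Polynomial.C (∑ j ∈ Finset.Icc 1 a, ∑ h ∈ Finset.range ((t - 1) / N + 1),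
      p j h / ((t : ℚ) - N * h) ^ j) * Polynomial.X ^ t

noncomputable def Vpoly (a N n : ℕ) (p : ℕ → ℕ → ℚ) : Polynomial ℚ :=
  -∑ t ∈ Finset.range n,
    Polynomial.C (∑ j ∈ Finset.Icc 1 a, ∑ h ∈ Finset.Icc ((t + N) / N) (n / N),
      p j h / ((N * h : ℚ) - t) ^ j) * Polynomial.X ^ t

/-- Derivative of a rational function. -/
noncomputable def ratDeriv (f : RatFunc ℚ) : RatFunc ℚ :=
  RatFunc.mk (Polynomial.derivative f.num * f.denom - f.num * Polynomial.derivative f.denom)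
    (f.denom ^ 2)

/-- `P_{k,j}` (with `k` shifted: `PPk k j = P_{k+1,j}`), defined by `P_{1,j} = P_j` and
`P_{k,j} = P'_{k-1,j} - (1/z) P_{k-1,j+1}`, where `P_{k-1,a+1} = 0`. -/
noncomputable def PPk (a N n : ℕ) (p : ℕ → ℕ → ℚ) : ℕ → ℕ → RatFunc ℚ
  | 0, j => algebraMap (Polynomial ℚ) (RatFunc ℚ) (Ppoly a N n p j)
  | k + 1, j => ratDeriv (PPk a N n p k j) - (1 / RatFunc.X) * PPk a N n p k (j + 1)

/-- `U_k` (with `k` shifted: `UkF k = U_{k+1}`): `U₁ = U`, `U_k = U'_{k-1} - P_{k-1,1}/(1-z)`. -/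
noncomputable def UkF (a N n : ℕ) (p : ℕ → ℕ → ℚ) : ℕ → RatFunc ℚ
  | 0 => algebraMap (Polynomial ℚ) (RatFunc ℚ) (Upoly a N n p)
  | k + 1 => ratDeriv (UkF a N n p k) - (1 / (1 - RatFunc.X)) * PPk a N n p k 1

/-- `V_k` (with `k` shifted: `VkF k = V_{k+1}`): `V₁ = V`, `V_k = V'_{k-1} + P_{k-1,1}/(z(1-z))`. -/
noncomputable def VkF (a N n : ℕ) (p : ℕ → ℕ → ℚ) : ℕ → RatFunc ℚ
  | 0 => algebraMap (Polynomial ℚ) (RatFunc ℚ) (Vpoly a N n p)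
  | k + 1 => ratDeriv (VkF a N n p k) + (1 / (RatFunc.X * (1 - RatFunc.X))) * PPk a N n p k 1

/-!
Write `c_{k,j,h}` for the coefficient of `z^{Nh}` in `z^k P_{k+1,j}`; then `c_{0,j,h} = p_{j,h}` and
`c_{k+1,j,h} = (Nh - k) c_{k,j,h} - c_{k,j+1,h}`. On `Φ_k(t) = ∑_{h,j} c_{k,j,h} / (t + Nh)^j` this
recursion reads `Φ_{k+1} = -(t + k) Φ_k + s_k`, where `s_k = ∑_h c_{k,1,h} = P_{k+1,1}(1)` is the
coefficient of `1/t` in the expansion of `Φ_k` at infinity. As `Φ_0 = F` vanishes to order `d₀` at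
infinity, induction gives `s_k = 0` and `Φ_k = (-1)^k (t)_k F` as long as `k + 1 < d₀`. Concretely,
over the common denominator `∏_h (t + Nh)^a` of degree `D = a(n/N + 1)`, `s_k` is the coefficient of
`t^{D-1}` in the numerator of `Φ_k`, which has degree at most `k + 2rn`.

Hence `P_{k,1}` vanishes at `1` for `k < d₀`, which cancels the pole of `1/(1 - z)` in the
recursions for `U_k` and `V_k`; differentiation and the other factors create no pole at `1`.
-/

open Polynomial Finset

section PartialFractionNumerator

variable {R : Type*} [CommRing R]

lemma sum_Icc_mul_pow_sub_succ (f : ℕ → R) (u : R) (a : ℕ) :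
    ∑ j ∈ Icc 1 (a + 1), f j * u ^ (a + 1 - j)
      = u * ∑ j ∈ Icc 1 a, f j * u ^ (a - j) + f (a + 1) := by
  rw [sum_Icc_succ_top (by omega), Nat.sub_self, pow_zero, mul_one, mul_sum]
  congr 1
  refine sum_congr rfl fun j hj => ?_
  rw [Nat.sub_add_comm (mem_Icc.mp hj).2, pow_succ]
  ring

lemma sum_Icc_shift_mul_pow (c : ℕ → R) (z u : R) (a : ℕ) :
    ∑ j ∈ Icc 1 a, (z * c j - c (j + 1)) * u ^ (a - j)
      = (z - u) * ∑ j ∈ Icc 1 a, c j * u ^ (a - j) + c 1 * u ^ a - c (a + 1) := by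
  induction a with
  | zero => simp
  | succ a ih =>
    rw [sum_Icc_mul_pow_sub_succ, sum_Icc_mul_pow_sub_succ, ih]
    ring

lemma natDegree_sum_Icc_C_mul_pow_le (a : ℕ) (c : ℕ → R) (r : R) :
    (∑ j ∈ Icc 1 a, C (c j) * (X + C r) ^ (a - j)).natDegree ≤ a - 1 := by
  refine natDegree_sum_le_of_forall_le _ _ fun j hj => (natDegree_C_mul_le _ _).trans ?_
  have h : ((X + C r) ^ (a - j)).natDegree ≤ a - j := by compute_degree
  have := (mem_Icc.mp hj).1
  omega

lemma coeff_sum_Icc_C_mul_pow {a : ℕ} (ha : 1 ≤ a) (c : ℕ → R) (r : R) :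
    (∑ j ∈ Icc 1 a, C (c j) * (X + C r) ^ (a - j)).coeff (a - 1) = c 1 := by
  simp only [finsetSum_coeff, coeff_C_mul, coeff_X_add_C_pow]
  rw [sum_eq_single_of_mem 1 (mem_Icc.mpr ⟨le_rfl, ha⟩)]
  · simp
  · intro j hj hj1
    rw [Nat.choose_eq_zero_of_lt (by have := (mem_Icc.mp hj); omega), Nat.cast_zero, mul_zero,
      mul_zero]

variable {ι : Type*} [DecidableEq ι] (s : Finset ι) (y : ι → R) (a : ℕ)

/-- The numerator of `∑_{h ∈ s} ∑_{j=1}^a c j h / (X + y h)^j` over `∏_{h ∈ s} (X + y h)^a`. -/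
noncomputable def pfNumerator (c : ℕ → ι → R) : R[X] :=
  ∑ h ∈ s, (∑ j ∈ Icc 1 a, C (c j h) * (X + C (y h)) ^ (a - j)) *
    ∏ h' ∈ s.erase h, (X + C (y h')) ^ a

lemma coeff_pfNumerator (ha : 1 ≤ a) (c : ℕ → ι → R) :
    (pfNumerator s y a c).coeff (a * #s - 1) = ∑ h ∈ s, c 1 h := by
  rw [pfNumerator, finsetSum_coeff]
  refine sum_congr rfl fun h hh => ?_
  have hdeg : ∀ h' ∈ s.erase h, ((X + C (y h')) ^ a).natDegree ≤ a := fun _ _ => by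
    compute_degree
  have hcard : a * #s - 1 = (a - 1) + #(s.erase h) * a := by
    rw [← card_erase_add_one hh, mul_add, mul_one, mul_comm]
    omega
  have hR : (∏ h' ∈ s.erase h, (X + C (y h')) ^ a).natDegree ≤ #(s.erase h) * a := by
    simpa using (natDegree_prod_le _ _).trans (sum_le_card_nsmul _ _ _ hdeg)
  rw [hcard, coeff_mul_add_eq_of_natDegree_le (natDegree_sum_Icc_C_mul_pow_le a _ _) hR,
    coeff_sum_Icc_C_mul_pow ha, coeff_prod_of_natDegree_le (h := hdeg)]
  simp [coeff_X_add_C_pow]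

lemma pfNumerator_shift (c : ℕ → ι → R) (hc : ∀ h ∈ s, c (a + 1) h = 0) (l : R) :
    pfNumerator s y a (fun j h => (y h - l) * c j h - c (j + 1) h)
      = -(X + C l) * pfNumerator s y a c
        + C (∑ h ∈ s, c 1 h) * ∏ h ∈ s, (X + C (y h)) ^ a := by
  rw [pfNumerator, pfNumerator, mul_sum, map_sum, sum_mul, ← sum_add_distrib]
  refine sum_congr rfl fun h hh => ?_
  have key := sum_Icc_shift_mul_pow (fun j => C (c j h)) (C (y h - l)) (X + C (y h)) a
  simp only [hc h hh, map_zero, sub_zero, ← map_mul, ← map_sub] at key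
  rw [key, ← mul_prod_erase s _ hh, map_sub]
  ring

lemma sum_eq_zero_of_natDegree_pfNumerator_lt (ha : 1 ≤ a) {c : ℕ → ι → R}
    (hc : (pfNumerator s y a c).natDegree < a * #s - 1) : ∑ h ∈ s, c 1 h = 0 := by
  rw [← coeff_pfNumerator s y a ha]
  exact coeff_eq_zero_of_natDegree_lt hc

lemma sum_eq_zero_of_shift_recursion {d : ℕ} (ha : 1 ≤ a) (c : ℕ → ℕ → ι → R)
    (hrec : ∀ k, c (k + 1) = fun j h => (y h - k) * c k j h - c k (j + 1) h)
    (htop : ∀ j, a < j → ∀ h, c 0 j h = 0)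
    (h0 : (pfNumerator s y a (c 0)).natDegree ≤ d) :
    ∀ k, k + 1 + d < a * #s → ∑ h ∈ s, c k 1 h = 0 := by
  have htop' : ∀ k j, a < j → ∀ h, c k j h = 0 := by
    intro k
    induction k with
    | zero => exact htop
    | succ k ih => intro j hj h; simp [hrec, ih j hj, ih (j + 1) (by omega)]
  have hdeg : ∀ k, k + d < a * #s → (pfNumerator s y a (c k)).natDegree ≤ k + d := by
    intro k
    induction k with
    | zero => simpa using fun _ => h0
    | succ k ih =>
      intro hk
      have hs := sum_eq_zero_of_natDegree_pfNumerator_lt s y a ha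
        ((ih (by omega)).trans_lt (by omega : k + d < a * #s - 1))
      rw [hrec, pfNumerator_shift s y a _ (fun h _ => htop' k _ (by omega) h), hs, map_zero,
        zero_mul, add_zero]
      refine (natDegree_mul_le_of_le (by compute_degree) (ih (by omega))).trans ?_
      omega
  intro k hk
  exact sum_eq_zero_of_natDegree_pfNumerator_lt s y a ha
    ((hdeg k (by omega)).trans_lt (by omega))

end PartialFractionNumerator

section PartialFractionIdentity

variable {K : Type*} [Field K] {ι : Type*} [DecidableEq ι] (s : Finset ι) (y : ι → K) (a : ℕ)

lemma eval_pfNumerator (c : ℕ → ι → K) {t : K} (ht : ∀ h ∈ s, t + y h ≠ 0) :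
    (pfNumerator s y a c).eval t
      = (∑ h ∈ s, ∑ j ∈ Icc 1 a, c j h / (t + y h) ^ j) * ∏ h ∈ s, (t + y h) ^ a := by
  rw [pfNumerator, eval_finsetSum, sum_mul]
  refine sum_congr rfl fun h hh => ?_
  rw [← mul_prod_erase s _ hh, eval_mul, eval_prod, eval_finsetSum, sum_mul, sum_mul]
  refine sum_congr rfl fun j hj => ?_
  have hpow : (t + y h) ^ a = (t + y h) ^ j * (t + y h) ^ (a - j) := by
    rw [← pow_add, Nat.add_sub_cancel' (mem_Icc.mp hj).2]
  have hne := pow_ne_zero j (ht h hh)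
  simp only [eval_mul, eval_C, eval_pow, eval_add, eval_X, hpow]
  field_simp

lemma eq_pfNumerator_of_eval [Infinite K] {A : K[X]} (c : ℕ → ι → K)
    (hA : ∀ t, (∀ h ∈ s, t + y h ≠ 0) →
      A.eval t / ∏ h ∈ s, (t + y h) ^ a = ∑ h ∈ s, ∑ j ∈ Icc 1 a, c j h / (t + y h) ^ j) :
    A = pfNumerator s y a c := by
  apply eq_of_infinite_eval_eq
  refine Set.Infinite.mono (fun t ht => ?_) (s.finite_toSet.image (fun h => -y h)).infinite_compl
  have ht' : ∀ h ∈ s, t + y h ≠ 0 := fun h hh h0 =>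
    ht ⟨h, hh, (eq_neg_of_add_eq_zero_left h0).symm⟩
  have hQ : ∏ h ∈ s, (t + y h) ^ a ≠ 0 :=
    prod_ne_zero_iff.mpr fun h hh => pow_ne_zero a (ht' h hh)
  rw [Set.mem_ofPred_eq, eval_pfNumerator s y a c ht', ← hA t ht', div_mul_cancel₀ _ hQ]

end PartialFractionIdentity

section Regularity

variable {K : Type*} [Field K]

def IsRegularAt (x : K) (f : RatFunc K) : Prop :=
  ∃ g q : K[X], q.eval x ≠ 0 ∧ f = algebraMap K[X] (RatFunc K) g / algebraMap K[X] (RatFunc K) q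

lemma algebraMap_ne_zero_of_eval_ne_zero {x : K} {q : K[X]} (hq : q.eval x ≠ 0) :
    algebraMap K[X] (RatFunc K) q ≠ 0 :=
  RatFunc.algebraMap_ne_zero fun h => hq (by simp [h])

lemma isRegularAt_algebraMap (x : K) (g : K[X]) : IsRegularAt x (algebraMap K[X] (RatFunc K) g) :=
  ⟨g, 1, by simp, by simp⟩

lemma IsRegularAt.eval_denom_ne_zero {x : K} {f : RatFunc K} (hf : IsRegularAt x f) :
    f.denom.eval x ≠ 0 := by
  obtain ⟨g, q, hq, rfl⟩ := hf
  obtain ⟨w, hw⟩ := RatFunc.denom_div_dvd g q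
  exact fun h0 => hq (by rw [hw, eval_mul, h0, zero_mul])

lemma RatFunc.eval_algebraMap_div {x : K} (g : K[X]) {q : K[X]} (hq : q.eval x ≠ 0) :
    RatFunc.eval (RingHom.id K) x (algebraMap K[X] (RatFunc K) g / algebraMap K[X] (RatFunc K) q)
      = g.eval x / q.eval x := by
  have hf : IsRegularAt x (algebraMap K[X] (RatFunc K) g / algebraMap K[X] (RatFunc K) q) :=
    ⟨g, q, hq, rfl⟩
  have hmul := RatFunc.eval_mul (RingHom.id K) x hf.eval_denom_ne_zero
    (y := algebraMap K[X] (RatFunc K) q) (by simp)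
  rw [div_mul_cancel₀ _ (algebraMap_ne_zero_of_eval_ne_zero hq)] at hmul
  simp only [RatFunc.eval_algebraMap, Algebra.algebraMap_self, RingHom.id_apply,
    eval₂_id] at hmul
  rw [eq_div_iff hq, hmul]

lemma IsRegularAt.add {x : K} {f₁ f₂ : RatFunc K} (h₁ : IsRegularAt x f₁) (h₂ : IsRegularAt x f₂) :
    IsRegularAt x (f₁ + f₂) := by
  obtain ⟨g₁, q₁, hq₁, rfl⟩ := h₁
  obtain ⟨g₂, q₂, hq₂, rfl⟩ := h₂
  refine ⟨g₁ * q₂ + q₁ * g₂, q₁ * q₂, by simp [hq₁, hq₂], ?_⟩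
  rw [div_add_div _ _ (algebraMap_ne_zero_of_eval_ne_zero hq₁)
    (algebraMap_ne_zero_of_eval_ne_zero hq₂)]
  simp

lemma IsRegularAt.neg {x : K} {f : RatFunc K} (hf : IsRegularAt x f) : IsRegularAt x (-f) := by
  obtain ⟨g, q, hq, rfl⟩ := hf
  exact ⟨-g, q, hq, by rw [map_neg, neg_div]⟩

lemma IsRegularAt.sub {x : K} {f₁ f₂ : RatFunc K} (h₁ : IsRegularAt x f₁) (h₂ : IsRegularAt x f₂) :
    IsRegularAt x (f₁ - f₂) := by
  simpa only [sub_eq_add_neg] using h₁.add h₂.neg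

lemma IsRegularAt.mul {x : K} {f₁ f₂ : RatFunc K} (h₁ : IsRegularAt x f₁) (h₂ : IsRegularAt x f₂) :
    IsRegularAt x (f₁ * f₂) := by
  obtain ⟨g₁, q₁, hq₁, rfl⟩ := h₁
  obtain ⟨g₂, q₂, hq₂, rfl⟩ := h₂
  exact ⟨g₁ * g₂, q₁ * q₂, by simp [hq₁, hq₂], by rw [div_mul_div_comm, map_mul, map_mul]⟩

lemma isRegularAt_one_div_X {x : K} (hx : x ≠ 0) : IsRegularAt x (1 / RatFunc.X) :=
  ⟨1, X, by simpa using hx, by simp⟩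

lemma isRegularAt_one_div_C_sub_X_mul {x : K} {g q : K[X]} (hg : g.eval x = 0)
    (hq : q.eval x ≠ 0) :
    IsRegularAt x (1 / (RatFunc.C x - RatFunc.X) *
      (algebraMap K[X] (RatFunc K) g / algebraMap K[X] (RatFunc K) q)) := by
  obtain ⟨w, rfl⟩ := dvd_iff_isRoot.mpr hg
  refine ⟨-w, q, hq, ?_⟩
  have hX : (RatFunc.C x - RatFunc.X : RatFunc K) ≠ 0 := by
    rw [← RatFunc.algebraMap_C, ← RatFunc.algebraMap_X, ← map_sub, ← neg_sub]
    exact RatFunc.algebraMap_ne_zero (neg_ne_zero.mpr (X_sub_C_ne_zero x))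
  rw [map_mul, map_sub, RatFunc.algebraMap_X, RatFunc.algebraMap_C, map_neg]
  field_simp
  ring

end Regularity

lemma X_mul_derivative_X_pow {R : Type*} [CommSemiring R] (n : ℕ) :
    (X : R[X]) * derivative (X ^ n) = C (n : R) * X ^ n := by
  cases n with
  | zero => simp
  | succ m =>
    rw [derivative_X_pow, Nat.add_sub_cancel, pow_succ]
    ring

lemma ratDeriv_div (g q : ℚ[X]) (hq : q ≠ 0) :
    ratDeriv (algebraMap ℚ[X] (RatFunc ℚ) g / algebraMap ℚ[X] (RatFunc ℚ) q)
      = algebraMap ℚ[X] (RatFunc ℚ) (derivative g * q - g * derivative q)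
        / algebraMap ℚ[X] (RatFunc ℚ) (q ^ 2) := by
  set f := algebraMap ℚ[X] (RatFunc ℚ) g / algebraMap ℚ[X] (RatFunc ℚ) q
  have hd : f.denom ≠ 0 := RatFunc.denom_ne_zero f
  have hcross : f.num * q = g * f.denom := by
    apply IsFractionRing.injective ℚ[X] (RatFunc ℚ)
    have hnd := RatFunc.num_div_denom f
    rw [div_eq_div_iff (RatFunc.algebraMap_ne_zero hd) (RatFunc.algebraMap_ne_zero hq)] at hnd
    rw [map_mul, map_mul, hnd]
  have hcross' := congrArg derivative hcross
  simp only [derivative_mul] at hcross'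
  rw [ratDeriv, RatFunc.mk_eq_div, div_eq_div_iff (RatFunc.algebraMap_ne_zero (pow_ne_zero 2 hd))
    (RatFunc.algebraMap_ne_zero (pow_ne_zero 2 hq)), ← map_mul, ← map_mul]
  refine congrArg _ ?_
  linear_combination
    (f.denom * q) * hcross' - (derivative f.denom * q + f.denom * derivative q) * hcross

lemma IsRegularAt.ratDeriv {x : ℚ} {f : RatFunc ℚ} (hf : IsRegularAt x f) :
    IsRegularAt x (ratDeriv f) := by
  obtain ⟨g, q, hq, rfl⟩ := hf
  rw [ratDeriv_div g q fun h => hq (by simp [h])]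
  exact ⟨_, q ^ 2, by simpa using hq, rfl⟩

/-- `z ^ k * P_{k+1, j}(z) = ∑_h PPkCoeff a N p k j h * z ^ (N h)`. -/
noncomputable def PPkCoeff (a N : ℕ) (p : ℕ → ℕ → ℚ) : ℕ → ℕ → ℕ → ℚ
  | 0, j, h => if 1 ≤ j ∧ j ≤ a then p j h else 0
  | k + 1, j, h => ((N : ℚ) * h - k) * PPkCoeff a N p k j h - PPkCoeff a N p k (j + 1) h

noncomputable def PPkNum (a N n : ℕ) (p : ℕ → ℕ → ℚ) (k j : ℕ) : ℚ[X] :=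
  ∑ h ∈ range (n / N + 1), C (PPkCoeff a N p k j h) * X ^ (N * h)

section PPk

variable (a N n : ℕ) (p : ℕ → ℕ → ℚ)

lemma PPkNum_succ (k j : ℕ) :
    PPkNum a N n p (k + 1) j
      = X * derivative (PPkNum a N n p k j) - C (k : ℚ) * PPkNum a N n p k j
        - PPkNum a N n p k (j + 1) := by
  simp only [PPkNum, derivative_sum, mul_sum, ← sum_sub_distrib]
  refine sum_congr rfl fun h _ => ?_
  rw [derivative_C_mul, PPkCoeff, mul_left_comm, X_mul_derivative_X_pow]
  simp only [Nat.cast_mul, C_sub, C_mul, map_natCast]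
  ring

lemma PPk_eq_PPkNum_div (k j : ℕ) :
    PPk a N n p k j = algebraMap ℚ[X] (RatFunc ℚ) (PPkNum a N n p k j)
      / algebraMap ℚ[X] (RatFunc ℚ) (X ^ k) := by
  induction k generalizing j with
  | zero =>
    rw [PPk, pow_zero, map_one, div_one, Ppoly]
    split_ifs with hj <;> simp [PPkNum, PPkCoeff, hj]
  | succ k ih =>
    rw [PPk, ih, ih, ratDeriv_div _ _ (pow_ne_zero _ X_ne_zero), PPkNum_succ]
    have hXk := congrArg (algebraMap ℚ[X] (RatFunc ℚ)) (X_mul_derivative_X_pow (R := ℚ) k)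
    simp only [map_sub, map_mul, map_pow, RatFunc.algebraMap_X, map_natCast] at hXk ⊢
    have hX : (RatFunc.X : RatFunc ℚ) ≠ 0 := RatFunc.X_ne_zero
    field_simp
    linear_combination
      -(RatFunc.X ^ (k + 1) * algebraMap ℚ[X] (RatFunc ℚ) (PPkNum a N n p k j)) * hXk

lemma eval_one_PPkNum (k j : ℕ) :
    (PPkNum a N n p k j).eval 1 = ∑ h ∈ range (n / N + 1), PPkCoeff a N p k j h := by
  simp [PPkNum, eval_finsetSum]

end PPk

noncomputable def fratNumerator (a r N n : ℕ) : ℚ[X] :=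
  C (((n / N).factorial : ℚ) ^ (a - 2 * r * N)) *
    (ascPochhammer ℚ (r * n)).comp (X - C ((r : ℚ) * n)) *
    (ascPochhammer ℚ (r * n)).comp (X + C (n : ℚ) + 1)

section Frat

variable (a r N n : ℕ)

lemma Frat_eq_eval_fratNumerator_div (t : ℚ) :
    Frat a r N n t
      = (fratNumerator a r N n).eval t / ∏ h ∈ range (n / N + 1), (t + N * h) ^ a := by
  simp [Frat, fratNumerator, eval_comp]

lemma natDegree_fratNumerator_le : (fratNumerator a r N n).natDegree ≤ 2 * r * n := by
  have hcomp (c : ℚ[X]) (hc : c.natDegree ≤ 1) :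
      ((ascPochhammer ℚ (r * n)).comp c).natDegree ≤ r * n :=
    natDegree_comp_le.trans (by simpa [ascPochhammer_natDegree] using Nat.mul_le_mul_left _ hc)
  refine natDegree_mul_le_of_le (natDegree_mul_le_of_le (natDegree_C _).le
    (hcomp _ (by compute_degree))) (hcomp _ (by compute_degree)) |>.trans_eq ?_
  ring

lemma fratNumerator_eq_pfNumerator {p : ℕ → ℕ → ℚ} (hp : IsPartialFractionCoeffs a r N n p) :
    fratNumerator a r N n
      = pfNumerator (range (n / N + 1)) (fun h => (N : ℚ) * h) a (PPkCoeff a N p 0) := by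
  refine eq_pfNumerator_of_eval _ _ _ _ fun t ht => ?_
  rw [← Frat_eq_eval_fratNumerator_div, hp t ht]
  refine sum_congr rfl fun h _ => sum_congr rfl fun j hj => ?_
  rw [PPkCoeff, if_pos (mem_Icc.mp hj)]

lemma sum_PPkCoeff_one_eq_zero {p : ℕ → ℕ → ℚ} (hp : IsPartialFractionCoeffs a r N n p)
    {k : ℕ} (hk : k + 1 + 2 * r * n < a * (n / N + 1)) :
    ∑ h ∈ range (n / N + 1), PPkCoeff a N p k 1 h = 0 := by
  have ha : 1 ≤ a := Nat.pos_of_ne_zero (by rintro rfl; simp at hk)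
  refine sum_eq_zero_of_shift_recursion _ _ a ha (PPkCoeff a N p) (fun _ => rfl)
    (fun j hj h => if_neg (by omega)) ?_ k (by simpa using hk)
  rw [← fratNumerator_eq_pfNumerator a r N n hp]
  exact natDegree_fratNumerator_le a r N n

end Frat

section UV

variable (a N n : ℕ) (p : ℕ → ℕ → ℚ)

lemma isRegularAt_one_UkF {k : ℕ} (hP : ∀ m < k, (PPkNum a N n p m 1).eval 1 = 0) :
    IsRegularAt 1 (UkF a N n p k) := by
  induction k with
  | zero => exact isRegularAt_algebraMap 1 _
  | succ k ih =>
    rw [UkF, PPk_eq_PPkNum_div]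
    refine (ih fun m hm => hP m (by omega)).ratDeriv.sub ?_
    simpa using isRegularAt_one_div_C_sub_X_mul (hP k k.lt_succ_self) (q := X ^ k) (by simp)

lemma isRegularAt_one_VkF {k : ℕ} (hP : ∀ m < k, (PPkNum a N n p m 1).eval 1 = 0) :
    IsRegularAt 1 (VkF a N n p k) := by
  induction k with
  | zero => exact isRegularAt_algebraMap 1 _
  | succ k ih =>
    rw [VkF, PPk_eq_PPkNum_div, ← one_div_mul_one_div, mul_assoc]
    refine (ih fun m hm => hP m (by omega)).ratDeriv.add
      ((isRegularAt_one_div_X one_ne_zero).mul ?_)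
    simpa using isRegularAt_one_div_C_sub_X_mul (hP k k.lt_succ_self) (q := X ^ k) (by simp)

end UV

theorem no_pole_at_one_and_first_coefficient_vanishes_general
    (a r N n : ℕ)
    (p : ℕ → ℕ → ℚ) (hp : IsPartialFractionCoeffs a r N n p) :
    ∀ k : ℕ, 1 ≤ k → k + 1 ≤ a * (n / N + 1) - 2 * r * n →
      (Polynomial.eval (1 : ℚ) (PPk a N n p (k - 1) 1).denom ≠ 0 ∧
        RatFunc.eval (RingHom.id ℚ) 1 (PPk a N n p (k - 1) 1) = 0) ∧
      Polynomial.eval (1 : ℚ) (UkF a N n p (k - 1)).denom ≠ 0 ∧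
      Polynomial.eval (1 : ℚ) (VkF a N n p (k - 1)).denom ≠ 0 := by
  intro k hk1 hk2
  obtain ⟨k, rfl⟩ : ∃ m, k = m + 1 := ⟨k - 1, by omega⟩
  rw [Nat.add_sub_cancel]
  have hP : ∀ m ≤ k, (PPkNum a N n p m 1).eval 1 = 0 := fun m hm => by
    rw [eval_one_PPkNum]
    exact sum_PPkCoeff_one_eq_zero a r N n hp (by omega)
  have hXk : (X ^ k : ℚ[X]).eval 1 ≠ 0 := by simp
  refine ⟨⟨?_, ?_⟩, (isRegularAt_one_UkF a N n p fun m hm => hP m hm.le).eval_denom_ne_zero,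
    (isRegularAt_one_VkF a N n p fun m hm => hP m hm.le).eval_denom_ne_zero⟩
  · rw [PPk_eq_PPkNum_div]
    exact IsRegularAt.eval_denom_ne_zero ⟨_, _, hXk, rfl⟩
  · rw [PPk_eq_PPkNum_div, RatFunc.eval_algebraMap_div _ hXk, hP k le_rfl, zero_div]

/-- Let `a, r, N, n` be positive integers with `2rN < a` and `N ∣ n`, and set
`d₀ = a(n/N + 1) - 2rn`. Then for every `1 ≤ k ≤ d₀ - 1`: `P_{k,1}` is defined at `z = 1`
with `P_{k,1}(1) = 0`, and the rational functions `U_k`, `V_k` have no pole at `z = 1`. -/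
theorem no_pole_at_one_and_first_coefficient_vanishes
    (a r N n : ℕ) (ha : 0 < a) (hr : 0 < r) (hN : 0 < N) (hn : 0 < n)
    (hra : 2 * r * N < a) (hNn : N ∣ n)
    (p : ℕ → ℕ → ℚ) (hp : IsPartialFractionCoeffs a r N n p) :
    ∀ k : ℕ, 1 ≤ k → k + 1 ≤ a * (n / N + 1) - 2 * r * n →
      (Polynomial.eval (1 : ℚ) (PPk a N n p (k - 1) 1).denom ≠ 0 ∧
        RatFunc.eval (RingHom.id ℚ) 1 (PPk a N n p (k - 1) 1) = 0) ∧
      Polynomial.eval (1 : ℚ) (UkF a N n p (k - 1)).denom ≠ 0 ∧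
      Polynomial.eval (1 : ℚ) (VkF a N n p (k - 1)).denom ≠ 0 :=
  no_pole_at_one_and_first_coefficient_vanishes_general a r N n p hp
end

section
/- Let e be a positive integer divisible by 4 and let χ be a primitive Dirichlet character modulo e. Then χ(n + e/2) = −χ(n) for every integer n. In particular χ(e/2 + 1) = −1. -/
/-!
Write `e = 2n` with `n` even and put `u = 1 + n`. Then `u² = 1` in `ZMod e`, and `1, u` are the only
units of `ZMod e` congruent to `1` modulo `n`; so `χ u = 1` would make `χ` factor through level `n`,
contradicting primitivity. Hence `χ u = -1`. For odd `a` we have `a + n = a u` in `ZMod e`, and for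
even `a` both `a` and `a + n` are non-units, so `χ (a + n) = χ u * χ a = -χ a` in all cases.
-/

namespace ZMod

lemma eq_zero_or_eq_of_castHom_eq_zero {n : ℕ} [NeZero n] {x : ZMod (2 * n)}
    (hx : castHom (dvd_mul_left n 2) (ZMod n) x = 0) : x = 0 ∨ x = n := by
  rw [← natCast_zmod_val x, map_natCast, natCast_eq_zero_iff] at hx
  obtain ⟨c, hc⟩ := hx
  have hc2 : c < 2 := by
    have := x.val_lt
    nlinarith [NeZero.pos n]
  rw [← natCast_zmod_val x, hc]
  interval_cases c <;> simp

end ZMod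

namespace DirichletCharacter

variable {R : Type*} {n : ℕ}

lemma factorsThrough_of_map_one_add_eq_one [CommMonoidWithZero R] [NeZero n]
    {χ : DirichletCharacter R (2 * n)} (h : χ (1 + n) = 1) : χ.FactorsThrough n := by
  rw [factorsThrough_iff_ker_unitsMap (dvd_mul_left n 2)]
  intro u hu
  have hu' : ZMod.castHom (dvd_mul_left n 2) (ZMod n) ((u : ZMod (2 * n)) - 1) = 0 := by
    simpa [ZMod.unitsMap_def, sub_eq_zero, Units.ext_iff] using hu
  rw [MonoidHom.mem_ker, Units.ext_iff, MulChar.coe_toUnitHom, Units.val_one]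
  rcases ZMod.eq_zero_or_eq_of_castHom_eq_zero hu' with hu1 | hun
  · rw [sub_eq_zero.mp hu1, map_one]
  · rw [sub_eq_iff_eq_add'.mp hun, h]

lemma map_one_add_eq_neg_one [CommRing R] [NoZeroDivisors R] [NeZero n]
    {χ : DirichletCharacter R (2 * n)} (hχ : χ.IsPrimitive) (hn : _root_.Even n) :
    χ (1 + n) = -1 := by
  obtain ⟨k, rfl⟩ := hn
  have hsq : ((1 + (k + k : ℕ)) * (1 + (k + k : ℕ)) : ZMod (2 * (k + k))) = 1 := by
    have h0 : ((2 * (k + k) : ℕ) : ZMod (2 * (k + k))) = 0 := ZMod.natCast_self _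
    push_cast at h0 ⊢
    linear_combination (1 + k) * h0
  refine (mul_self_eq_one_iff.mp (by rw [← map_mul, hsq, map_one])).resolve_left fun h ↦ ?_
  have hle : χ.conductor ≤ k + k :=
    Nat.sInf_le ((mem_conductorSet_iff χ).mpr (factorsThrough_of_map_one_add_eq_one h))
  have hpos := NeZero.pos (k + k)
  rw [hχ] at hle
  omega

lemma map_intCast_add_eq_map_one_add_mul [CommMonoidWithZero R] (χ : DirichletCharacter R (2 * n))
    (hn : _root_.Even n) (a : ℤ) : χ (a + n) = χ (1 + n) * χ a := by
  rcases Int.even_or_odd a with ⟨k, rfl⟩ | ⟨k, rfl⟩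
  · obtain ⟨m, rfl⟩ := hn
    have h2 : ¬IsUnit (2 : ZMod (2 * (m + m))) := by
      rw [show (2 : ZMod (2 * (m + m))) = (2 : ℕ) by norm_cast, ZMod.isUnit_iff_coprime]
      simp [Nat.coprime_mul_iff_right]
    have hk : ((k + k : ℤ) : ZMod (2 * (m + m))) = 2 * k := by push_cast; ring
    have hkm : ((k + k : ℤ) : ZMod (2 * (m + m))) + (m + m : ℕ) = 2 * (k + m) := by
      push_cast; ring
    rw [hkm, hk, χ.map_nonunit fun h ↦ h2 (isUnit_of_mul_isUnit_left h),
      χ.map_nonunit fun h ↦ h2 (isUnit_of_mul_isUnit_left h), mul_zero]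
  · have : ((2 * k + 1 : ℤ) : ZMod (2 * n)) * (1 + n) = (2 * k + 1 : ℤ) + n := by
      rw [← sub_eq_zero]
      have h0 : ((2 * n : ℕ) : ZMod (2 * n)) = 0 := ZMod.natCast_self _
      push_cast at h0 ⊢
      linear_combination k * h0
    rw [← this, map_mul, mul_comm]

end DirichletCharacter

/-- Let `e` be a positive integer divisible by `4` and `χ` a primitive Dirichlet
character modulo `e`. Then `χ(n + e/2) = -χ(n)` for every integer `n`; in particular
`χ(e/2 + 1) = -1`. -/
theorem primitive_character_half_period_sign
    (e : ℕ) (he : 0 < e) (he4 : 4 ∣ e)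
    (χ : DirichletCharacter ℂ e) (hχ : χ.IsPrimitive) :
    (∀ n : ℤ, χ (((n + e / 2 : ℤ) : ZMod e)) = -χ ((n : ZMod e))) ∧
      χ (((e / 2 + 1 : ℕ) : ZMod e)) = -1 := by
  obtain ⟨n, hn, rfl⟩ : ∃ n, Even n ∧ e = 2 * n := by
    obtain ⟨m, rfl⟩ := he4
    exact ⟨2 * m, even_two_mul m, by ring⟩
  have : NeZero n := ⟨by omega⟩
  have hhalf : ((2 * n : ℕ) : ℤ) / 2 = n := by omega
  have hshift (a : ℤ) : χ ((a + ((2 * n : ℕ) : ℤ) / 2 : ℤ) : ZMod (2 * n)) = -χ a := by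
    rw [hhalf, Int.cast_add, Int.cast_natCast, χ.map_intCast_add_eq_map_one_add_mul hn,
      χ.map_one_add_eq_neg_one hχ hn, neg_one_mul]
  refine ⟨hshift, ?_⟩
  have h1 := hshift 1
  rw [Int.cast_one, map_one, hhalf, add_comm, ← Nat.cast_one (R := ℤ), ← Nat.cast_add,
    Int.cast_natCast] at h1
  rwa [show 2 * n / 2 + 1 = n + 1 by omega]
end
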